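/- For every nonnegative integer n, ∑_{k=0}^{n} (-1)^k * C(n,k) * k^{n+1} = (-1)^n * n * (n+1)! / 2. -/

import Mathlib

/-!
The sum is `(-1)ⁿ Δⁿf(0)` for `f x = x ^ (n + 1)`. Since `Δⁿ⁺¹f` is the constant `(n + 1)!`,
`Δⁿf` is affine with that slope, so `Δⁿf(0) = Δⁿf(-n) + n (n + 1)!`. On the other hand,
reflecting the sum, `Δⁿ(f ∘ neg)(0) = (-1)ⁿ Δⁿf(-n)`, and `f ∘ neg = (-1)ⁿ⁺¹ f`, whence
`Δⁿf(-n) = -Δⁿf(0)`.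
-/

open Nat Finset Function fwdDiff

theorem neg_one_pow_mul_neg_one_pow_sub {R : Type*} [Monoid R] [HasDistribNeg R] {k n : ℕ}
    (hkn : k ≤ n) : (-1 : R) ^ n * (-1) ^ (n - k) = (-1) ^ k := by
  obtain ⟨j, rfl⟩ := exists_add_of_le hkn
  rw [add_tsub_cancel_left, pow_add, mul_assoc, ← pow_add, Even.neg_one_pow ⟨j, rfl⟩, mul_one]

section AddCommGroup

variable {M G : Type*} [AddCommGroup M] [AddCommGroup G]

theorem fwdDiff_iter_comp_neg (h : M) (f : M → G) (n : ℕ) (y : M) :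
    Δ_[h] ^[n] (fun x ↦ f (-x)) y = (-1 : ℤ) ^ n • Δ_[h] ^[n] f (-(y + n • h)) := by
  rw [fwdDiff_iter_eq_sum_shift, fwdDiff_iter_eq_sum_shift, smul_sum, ← sum_range_reflect]
  refine sum_congr rfl fun k hk ↦ ?_
  have hkn : k ≤ n := mem_range_succ_iff.mp hk
  rw [add_tsub_cancel_right, Nat.sub_sub_self hkn, Nat.choose_symm hkn, smul_smul,
    sub_nsmul h hkn, ← mul_assoc, neg_one_pow_mul_neg_one_pow_sub hkn]
  congr 2
  abel

theorem apply_add_nsmul_eq_of_fwdDiff_eq_const (h : M) {g : M → G} {c : G}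
    (hg : Δ_[h] g = fun _ ↦ c) (y : M) (m : ℕ) : g (y + m • h) = g y + m • c := by
  induction m with
  | zero => simp
  | succ m ih =>
    have hstep := congr_fun hg (y + m • h)
    rw [fwdDiff, sub_eq_iff_eq_add] at hstep
    rw [succ_nsmul, ← add_assoc, hstep, ih, succ_nsmul]
    abel

end AddCommGroup

section CommRing

variable {R : Type*} [CommRing R]

theorem sum_range_neg_one_pow_mul_choose_mul (f : R → R) (n : ℕ) :
    ∑ k ∈ range (n + 1), (-1) ^ k * (n.choose k : R) * f k = (-1) ^ n * Δ_[1] ^[n] f 0 := by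
  rw [fwdDiff_iter_eq_sum_shift, mul_sum]
  refine sum_congr rfl fun k hk ↦ ?_
  have hkn : k ≤ n := mem_range_succ_iff.mp hk
  rw [zsmul_eq_mul, zero_add, nsmul_one]
  push_cast
  rw [← mul_assoc, ← mul_assoc, neg_one_pow_mul_neg_one_pow_sub hkn]

theorem two_mul_fwdDiff_iter_pow_succ_zero (n : ℕ) :
    2 * Δ_[1] ^[n] (fun r : R ↦ r ^ (n + 1)) 0 = n * (n + 1)! := by
  set D := Δ_[1] ^[n] (fun r : R ↦ r ^ (n + 1))
  have hslope : D 0 = D (-n) + n * (n + 1)! := by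
    have hD : Δ_[1] D = fun _ ↦ ((n + 1)! : R) := by
      rw [← iterate_succ_apply' (f := fwdDiff 1), fwdDiff_iter_eq_factorial]
      rfl
    simpa using apply_add_nsmul_eq_of_fwdDiff_eq_const 1 hD (-n) n
  have hodd : D (-n) = -D 0 := by
    have hneg : (fun r : R ↦ (-r) ^ (n + 1)) = (-1 : R) ^ (n + 1) • fun r ↦ r ^ (n + 1) := by
      ext r
      simp only [neg_pow r, Pi.smul_apply, smul_eq_mul]
    have hrefl := fwdDiff_iter_comp_neg 1 (fun r : R ↦ r ^ (n + 1)) n 0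
    rw [hneg, fwdDiff_iter_const_smul, Pi.smul_apply, smul_eq_mul, zero_add, nsmul_one,
      zsmul_eq_mul] at hrefl
    push_cast at hrefl
    have hsq : (-1 : R) ^ (n + n) = 1 := (Even.add_self n).neg_one_pow
    linear_combination -(-1) ^ n * hrefl - (D (-n) + D 0) * hsq
  linear_combination hslope + hodd

end CommRing

theorem stmt6 (n : ℕ) :
    2 * ∑ k ∈ Finset.range (n + 1), (-1 : ℤ) ^ k * (n.choose k) * (k : ℤ) ^ (n + 1)
      = (-1) ^ n * (n : ℤ) * ((n + 1)! : ℤ) := by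
  rw [sum_range_neg_one_pow_mul_choose_mul (fun r : ℤ ↦ r ^ (n + 1)), mul_left_comm,
    two_mul_fwdDiff_iter_pow_succ_zero, mul_assoc]
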